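/- For any regular binary game and any stationary probability measure P on Σ^∞, and all natural numbers m ≥ 1 and n ≥ 0, the conditional generalized entropy is monotone in the length of the conditioning history: H_{m|n} ≥ H_{m|n+1}. -/

import Mathlib

open MeasureTheory ENNReal Filter Topology

noncomputable section

/-- A regular binary game `(Σ, Γ, λ)` with `Σ = {0,1}` (encoded as `Bool`, bit `0 = false`),
prediction space `Γ = [0,1]` and loss function `λ : Σ × [0,1] → [0,∞]` that is continuous,
convex in the prediction, and admits a prediction of finite loss on both outcomes. -/
structure RegularGame where
  loss : Bool → ℝ → ℝ≥0∞
  continuousOn : ∀ b, ContinuousOn (loss b) (Set.Icc 0 1)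
  convex : ∀ b : Bool, ∀ γ₁ ∈ Set.Icc (0:ℝ) 1, ∀ γ₂ ∈ Set.Icc (0:ℝ) 1,
      ∀ t ∈ Set.Icc (0:ℝ) 1,
      loss b (t * γ₁ + (1 - t) * γ₂)
        ≤ ENNReal.ofReal t * loss b γ₁ + ENNReal.ofReal (1 - t) * loss b γ₂
  finite_pred : ∃ γ ∈ Set.Icc (0:ℝ) 1, loss false γ < ⊤ ∧ loss true γ < ⊤

/-- A prediction strategy: for each history length `i`, a map from `i`-bit histories
to predictions in `[0,1]`. -/
def Strategy : Type := (i : ℕ) → (Fin i → Bool) → Set.Icc (0:ℝ) 1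

/-- Cumulative loss of a strategy on the finite string `w`. -/
def strategyLoss (G : RegularGame) {n : ℕ} (w : Fin n → Bool) (S : Strategy) : ℝ≥0∞ :=
  ∑ i : Fin n, G.loss (w i)
    ((S i.val (fun j : Fin i.val => w ⟨j.val, j.isLt.trans i.isLt⟩) : Set.Icc (0:ℝ) 1) : ℝ)

/-- Cylinder set of the finite string `w` in `Σ^∞`. -/
def cyl {n : ℕ} (w : Fin n → Bool) : Set (ℕ → Bool) := {ω | ∀ i : Fin n, ω i.val = w i}

/-- The `n`-step generalized entropy `H_n = inf_℘ Σ_{w ∈ Σ^n} P(w)·Loss(w,℘)`. -/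
def Hn (G : RegularGame) (P : Measure (ℕ → Bool)) (n : ℕ) : ℝ≥0∞ :=
  ⨅ S : Strategy, ∑ w : Fin n → Bool, P (cyl w) * strategyLoss G w S

/-- The generalized conditional entropy
`H_{n|m} = inf_℘ Σ_{w∈Σ^m, x∈Σ^n} P(w·x) · Σ_{i<n} λ(x_i, ℘^{m+i}(w·x_0⋯x_{i−1}))`. -/
def Hcond (G : RegularGame) (P : Measure (ℕ → Bool)) (n m : ℕ) : ℝ≥0∞ :=
  ⨅ S : Strategy, ∑ w : Fin m → Bool, ∑ x : Fin n → Bool,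
    P (cyl (Fin.append w x)) *
      ∑ i : Fin n, G.loss (x i)
        ((S (m + i.val)
          (Fin.append w (fun j : Fin i.val => x ⟨j.val, j.isLt.trans i.isLt⟩)) : Set.Icc (0:ℝ) 1) : ℝ)

/-- The left shift on one-sided sequences. -/
def shiftN : (ℕ → Bool) → (ℕ → Bool) := fun ω n => ω (n + 1)

/-! Given a strategy that sees `n` bits of history, let the strategy for `n + 1` bits forget the
oldest bit. Its losses do not depend on that bit, and by stationarity summing `P(b·w·x)` over the
forgotten bit `b` gives `P(w·x)`, so both strategies have the same expected loss. -/

theorem cyl_comp_cast {k l : ℕ} (h : k = l) (w : Fin l → Bool) : cyl (w ∘ Fin.cast h) = cyl w := by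
  subst h; rfl

theorem cyl_append_cons {n m : ℕ} (b : Bool) (w : Fin n → Bool) (x : Fin m → Bool) :
    cyl (Fin.append (Fin.cons b w) x) = cyl (Fin.cons b (Fin.append w x)) := by
  rw [Fin.append_cons, cyl_comp_cast]

theorem measurableSet_cyl {k : ℕ} (w : Fin k → Bool) : MeasurableSet (cyl w) := by
  simp only [cyl, Set.ofPred_forall]
  exact .iInter fun i => measurableSet_eq_fun (measurable_pi_apply _) measurable_const

theorem measurable_shiftN : Measurable shiftN :=
  measurable_pi_lambda _ fun n => measurable_pi_apply (n + 1)

theorem shiftN_preimage_cyl {k : ℕ} (v : Fin k → Bool) :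
    shiftN ⁻¹' cyl v = cyl (Fin.cons false v) ∪ cyl (Fin.cons true v) := by
  ext ω
  have hcons : ∀ b, ω ∈ cyl (Fin.cons b v) ↔ ω 0 = b ∧ shiftN ω ∈ cyl v := fun b => by
    simp [cyl, Fin.forall_fin_succ, shiftN]
  rw [Set.mem_union, hcons, hcons]
  cases ω 0 <;> simp

theorem disjoint_cyl_cons_false_true {k : ℕ} (v : Fin k → Bool) :
    Disjoint (cyl (Fin.cons false v)) (cyl (Fin.cons true v)) :=
  Set.disjoint_left.2 fun _ hfalse htrue => by simpa using (hfalse 0).symm.trans (htrue 0)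

theorem measure_cyl_cons_false_add_true {P : Measure (ℕ → Bool)} (hstat : P.map shiftN = P)
    {k : ℕ} (v : Fin k → Bool) :
    P (cyl (Fin.cons false v)) + P (cyl (Fin.cons true v)) = P (cyl v) := by
  conv_rhs => rw [← hstat, Measure.map_apply measurable_shiftN (measurableSet_cyl v),
    shiftN_preimage_cyl]
  exact (measure_union (disjoint_cyl_cons_false_true v) (measurableSet_cyl _)).symm

theorem sum_measure_cyl_append_tail {P : Measure (ℕ → Bool)} (hstat : P.map shiftN = P)
    {n m : ℕ} (F : (Fin n → Bool) → (Fin m → Bool) → ℝ≥0∞) :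
    ∑ w : Fin (n + 1) → Bool, ∑ x : Fin m → Bool, P (cyl (Fin.append w x)) * F (Fin.tail w) x
      = ∑ v : Fin n → Bool, ∑ x : Fin m → Bool, P (cyl (Fin.append v x)) * F v x := by
  rw [← (Fin.consEquiv fun _ => Bool).sum_comp, Fintype.sum_prod_type, Finset.sum_comm]
  refine Finset.sum_congr rfl fun v _ => ?_
  rw [Finset.sum_comm]
  refine Finset.sum_congr rfl fun x _ => ?_
  simp only [Fin.consEquiv, Equiv.coe_fn_mk, Fin.tail_cons, Fintype.sum_bool, ← add_mul,
    cyl_append_cons, add_comm (P (cyl (Fin.cons true _))), measure_cyl_cons_false_add_true hstat]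

namespace Strategy

def dropFirst (S : Strategy) : Strategy
  | 0, _ => ⟨0, Set.left_mem_Icc.2 zero_le_one⟩
  | i + 1, h => S i (Fin.tail h)

theorem apply_comp_cast (S : Strategy) {k l : ℕ} (h : k = l) (w : Fin l → Bool) :
    S k (w ∘ Fin.cast h) = S l w := by
  subst h; rfl

theorem dropFirst_append (S : Strategy) {n k : ℕ} (w : Fin (n + 1) → Bool) (y : Fin k → Bool) :
    S.dropFirst (n + 1 + k) (Fin.append w y) = S (n + k) (Fin.append (Fin.tail w) y) := by
  conv_lhs => rw [← Fin.cons_self_tail w, Fin.append_cons]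
  exact (S.dropFirst.apply_comp_cast _ _).trans (congrArg (S (n + k)) (Fin.tail_cons _ _))

end Strategy

theorem conditional_entropy_antitone_general
    (G : RegularGame) (P : Measure (ℕ → Bool))
    (hstat : P.map shiftN = P)
    (m n : ℕ) :
    Hcond G P m (n + 1) ≤ Hcond G P m n := by
  refine le_iInf fun S => iInf_le_of_le S.dropFirst (le_of_eq ?_)
  simp only [Strategy.dropFirst_append]
  exact sum_measure_cyl_append_tail hstat
    (fun v x => ∑ i : Fin m, G.loss (x i) (S (n + i.val)
      (Fin.append v fun j : Fin i.val => x ⟨j.val, j.isLt.trans i.isLt⟩)))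

/-- **Monotonicity of conditional generalized entropy in the conditioning history.**
For any regular binary game, any stationary probability measure `P` on `Σ^∞`, and all
`m ≥ 1`, `n ≥ 0`, we have `H_{m|n} ≥ H_{m|n+1}`. -/
theorem conditional_entropy_antitone
    (G : RegularGame) (P : Measure (ℕ → Bool)) [IsProbabilityMeasure P]
    (hstat : P.map shiftN = P)
    (m n : ℕ) (hm : 1 ≤ m) :
    Hcond G P m (n + 1) ≤ Hcond G P m n :=
  conditional_entropy_antitone_general G P hstat m n
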